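/- For every d ≥ 2 and k ≥ 2, α(d,k)/dᵏ ≤ (1 − ⌊(k−1)/2⌋/(k−1))·(1 − 1/k), where α(d,k) is the independence number of the de Bruijn graph B(d,k). In particular, for k odd, α(d,k) ≤ (k−1)/(2k) · dᵏ. -/

import Mathlib

/-- Adjacency in the de Bruijn graph `B(d,k)`. -/
def deBruijnAdj (d k : ℕ) (hk : 2 ≤ k) (u v : Fin k → Fin d) : Prop :=
  ∀ i : Fin (k - 1), u ⟨i.1 + 1, by omega⟩ = v ⟨i.1, by omega⟩

/-- The independence number of `B(d,k)`. -/
noncomputable def deBruijnIndep (d k : ℕ) (hk : 2 ≤ k) : ℕ :=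
  sSup {n : ℕ | ∃ S : Finset (Fin k → Fin d),
    (∀ u ∈ S, ∀ v ∈ S, ¬ deBruijnAdj d k hk u v) ∧ S.card = n}

lemma key_count (d k : ℕ) (hk : 2 ≤ k) (S : Finset (Fin k → Fin d))
    (hS : ∀ u ∈ S, ∀ v ∈ S, ¬ deBruijnAdj d k hk u v) :
    k * S.card ≤ (k / 2) * d ^ k := by
  have hkpos : 0 < k := by omega
  haveI : NeZero k := ⟨by omega⟩
  classical
  set g : (Fin k → Fin d) → Fin k → (Fin k → Fin d) := fun u j i => u (i + j) with hg
  have hone : (1 : Fin k).val = 1 := by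
    simp [Fin.val_one', Nat.mod_eq_of_lt (by omega : 1 < k)]
  -- step 1: no two consecutive rotations in S
  have step1 : ∀ u : Fin k → Fin d, ∀ j : Fin k, g u j ∈ S → g u (j + 1) ∉ S := by
    intro u j h1 h2
    apply hS _ h1 _ h2
    intro i
    show u (⟨i.1 + 1, by omega⟩ + j) = u (⟨i.1, by omega⟩ + (j + 1))
    congr 1
    have heq : (⟨i.1 + 1, by omega⟩ : Fin k) = ⟨i.1, by omega⟩ + 1 := by
      have hi := i.2
      apply Fin.ext
      simp [Fin.add_def, hone, Nat.mod_eq_of_lt (show i.1 + 1 < k by omega)]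
    rw [heq, add_assoc, add_comm 1 j]
  -- step 2: at most k/2 rotations of any word lie in S
  have step2 : ∀ u : Fin k → Fin d,
      (Finset.univ.filter (fun j => g u j ∈ S)).card ≤ k / 2 := by
    intro u
    set J := Finset.univ.filter (fun j => g u j ∈ S) with hJ
    have hdisj : Disjoint J (J.image (· + 1)) := by
      rw [Finset.disjoint_right]
      intro a ha haJ
      obtain ⟨b, hb, rfl⟩ := Finset.mem_image.mp ha
      exact step1 u b (Finset.mem_filter.mp hb).2 (Finset.mem_filter.mp haJ).2
    have hcard : (J.image (· + 1)).card = J.card :=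
      Finset.card_image_of_injective _ (add_left_injective 1)
    have hle := Finset.card_le_card (Finset.subset_univ (J ∪ J.image (· + 1)))
    rw [Finset.card_union_of_disjoint hdisj, hcard, Finset.card_univ, Fintype.card_fin] at hle
    omega
  -- step 3: for each rotation amount, rotation is a bijection
  have step3 : ∀ j : Fin k,
      (Finset.univ.filter (fun u : Fin k → Fin d => g u j ∈ S)).card = S.card := by
    intro j
    apply Finset.card_bij (fun u _ => g u j)
    · intro u hu; exact (Finset.mem_filter.mp hu).2
    · intro u hu v hv huv
      funext i
      have h := congrFun huv (i - j)
      have hij : i - j + j = i := sub_add_cancel i j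
      simpa [hg, hij] using h
    · intro v hv
      have hgv : g (fun i => v (i - j)) j = v := by
        funext i
        have hij : i + j - j = i := add_sub_cancel_right i j
        simp [hg, hij]
      exact ⟨fun i => v (i - j), Finset.mem_filter.mpr ⟨Finset.mem_univ _, by rw [hgv]; exact hv⟩,
        hgv⟩
  have hsum : ∑ u : Fin k → Fin d, (Finset.univ.filter (fun j => g u j ∈ S)).card
      = k * S.card := by
    have h1 : ∀ u : Fin k → Fin d, (Finset.univ.filter (fun j => g u j ∈ S)).card
        = ∑ j : Fin k, if g u j ∈ S then 1 else 0 := by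
      intro u; rw [Finset.card_filter]
    rw [Finset.sum_congr rfl (fun u _ => h1 u), Finset.sum_comm]
    have h2 : ∀ j : Fin k, (∑ u : Fin k → Fin d, if g u j ∈ S then 1 else 0) = S.card := by
      intro j; rw [← step3 j, Finset.card_filter]
    rw [Finset.sum_congr rfl (fun j _ => h2 j)]
    simp [mul_comm]
  calc k * S.card = ∑ u : Fin k → Fin d, (Finset.univ.filter (fun j => g u j ∈ S)).card :=
        hsum.symm
    _ ≤ ∑ _u : Fin k → Fin d, k / 2 := Finset.sum_le_sum (fun u _ => step2 u)
    _ = (k / 2) * d ^ k := by simp [Fintype.card_fun, mul_comm]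

/-- `α(d,k)/d^k ≤ (1 − ⌊(k−1)/2⌋/(k−1))·(1 − 1/k)`, and in
particular `α(d,k) ≤ (k−1)/(2k)·d^k` for odd `k`. -/
theorem stmt_11 (d k : ℕ) (hd : 2 ≤ d) (hk : 2 ≤ k) :
    (deBruijnIndep d k hk : ℝ) / (d : ℝ) ^ k ≤
        (1 - (((k - 1) / 2 : ℕ) : ℝ) / ((k : ℝ) - 1)) * (1 - 1 / (k : ℝ)) ∧
      (Odd k → (deBruijnIndep d k hk : ℝ) ≤ ((k : ℝ) - 1) / (2 * k) * (d : ℝ) ^ k) := by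
  classical
  have hmem : deBruijnIndep d k hk ∈ {n : ℕ | ∃ S : Finset (Fin k → Fin d),
      (∀ u ∈ S, ∀ v ∈ S, ¬ deBruijnAdj d k hk u v) ∧ S.card = n} := by
    have h0 : (0:ℕ) ∈ {n : ℕ | ∃ S : Finset (Fin k → Fin d),
        (∀ u ∈ S, ∀ v ∈ S, ¬ deBruijnAdj d k hk u v) ∧ S.card = n} :=
      ⟨∅, by simp, by simp⟩
    apply Nat.sSup_mem ⟨0, h0⟩
    refine ⟨d ^ k, fun n hn => ?_⟩
    obtain ⟨S, _, rfl⟩ := hn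
    calc S.card ≤ Fintype.card (Fin k → Fin d) := Finset.card_le_univ S
      _ = d ^ k := by simp [Fintype.card_fun]
  obtain ⟨S, hS, hcard⟩ := hmem
  have hmain : k * deBruijnIndep d k hk ≤ (k / 2) * d ^ k := by
    rw [← hcard]; exact key_count d k hk S hS
  have hdpos : (0 : ℝ) < (d : ℝ) ^ k := by positivity
  have hkpos : (0 : ℝ) < (k : ℝ) := by positivity
  have hmainR : (k : ℝ) * (deBruijnIndep d k hk : ℝ) ≤ ((k / 2 : ℕ) : ℝ) * (d : ℝ) ^ k := by
    exact_mod_cast hmain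
  have hk1 : (1 : ℝ) ≤ (k : ℝ) := by exact_mod_cast (by omega : 1 ≤ k)
  have hk2 : (2 : ℝ) ≤ (k : ℝ) := by exact_mod_cast hk
  constructor
  · have hhalf : ((k / 2 : ℕ) : ℝ) = (k : ℝ) - 1 - (((k - 1) / 2 : ℕ) : ℝ) := by
      have h1 : k / 2 + (k - 1) / 2 = k - 1 := by omega
      have h2 : ((k / 2 + (k - 1) / 2 : ℕ) : ℝ) = ((k - 1 : ℕ) : ℝ) := by rw [h1]
      push_cast [Nat.cast_sub (by omega : 1 ≤ k)] at h2
      linarith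
    have hrhs : (1 - (((k - 1) / 2 : ℕ) : ℝ) / ((k : ℝ) - 1)) * (1 - 1 / (k : ℝ))
        = ((k / 2 : ℕ) : ℝ) / (k : ℝ) := by
      rw [hhalf]
      have : ((k : ℝ) - 1) ≠ 0 := by linarith
      field_simp
    rw [hrhs, div_le_div_iff₀ hdpos hkpos]
    linarith [hmainR]
  · intro hodd
    obtain ⟨m, hm⟩ := hodd
    have hnat : 2 * (k / 2) = k - 1 := by omega
    have h2 : 2 * ((k / 2 : ℕ) : ℝ) = (k : ℝ) - 1 := by
      have h := congrArg (Nat.cast : ℕ → ℝ) hnat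
      push_cast [Nat.cast_sub (by omega : 1 ≤ k)] at h
      linarith
    rw [div_mul_eq_mul_div, le_div_iff₀ (by positivity : (0:ℝ) < 2 * k)]
    nlinarith [hmainR]
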